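/- For the Misra–Gries algorithm with k counters on a stream of length n, the final counter value ĉ(x) associated with any item x (taken as 0 if x is not stored) satisfies f(x) − n/(k+1) ≤ ĉ(x) ≤ f(x), where f(x) is the true frequency of x in the stream. -/
import Mathlib

open Finsupp

variable {α : Type*} [DecidableEq α]

noncomputable def mgStep (k : ℕ) (s : α →₀ ℕ) (x : α) : α →₀ ℕ :=
  if 0 < s x ∨ s.support.card < k then s.update x (s x + 1)
  else Finsupp.mapRange (· - 1) (by simp) s

noncomputable def mgRun (k : ℕ) (stream : List α) : α →₀ ℕ :=
  stream.foldl (mgStep k) 0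

noncomputable def mgSsum (s : α →₀ ℕ) : ℕ := s.sum fun _ v => v

lemma mg_upd_eq (s : α →₀ ℕ) (a : α) :
    s.update a (s a + 1) = s + Finsupp.single a 1 := by
  ext y
  rcases eq_or_ne y a with rfl | h
  · simp
  · simp [Finsupp.single_apply, h, Ne.symm h]

lemma mgSsum_single (a : α) : mgSsum (Finsupp.single a 1) = 1 := by
  simp [mgSsum, Finsupp.sum_single_index]

lemma mgSsum_add (s t : α →₀ ℕ) : mgSsum (s + t) = mgSsum s + mgSsum t := by
  simp [mgSsum, Finsupp.sum_add_index]

lemma mg_dec_apply (s : α →₀ ℕ) (hf : (fun v => v - 1) (0:ℕ) = 0) (y : α) :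
    (Finsupp.mapRange (· - 1) hf s : α →₀ ℕ) y = s y - 1 := by
  simp

lemma mg_dec_ssum (s : α →₀ ℕ) (hf : (fun v => v - 1) (0:ℕ) = 0) :
    (mgSsum (Finsupp.mapRange (· - 1) hf s) : ℤ) = (mgSsum s : ℤ) - s.support.card := by
  have h1 : mgSsum (Finsupp.mapRange (· - 1) hf s) = s.sum fun _ b => b - 1 := by
    simp [mgSsum, Finsupp.sum_mapRange_index]
  rw [h1, mgSsum, Finsupp.sum, Finsupp.sum]
  have hterm : ∀ a ∈ s.support, ((s a - 1 : ℕ) : ℤ) = (s a : ℤ) - 1 := by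
    intro a ha
    have : 1 ≤ s a := Nat.one_le_iff_ne_zero.2 (Finsupp.mem_support_iff.1 ha)
    push_cast; omega
  push_cast
  rw [Finset.sum_congr rfl hterm, Finset.sum_sub_distrib]
  simp

lemma mg_upd_apply (s : α →₀ ℕ) (a x : α) :
    (((s + Finsupp.single a 1 : α →₀ ℕ) x : ℕ) : ℤ) = (s x : ℤ) + if a = x then 1 else 0 := by
  rw [Finsupp.add_apply, Finsupp.single_apply]
  push_cast
  split_ifs <;> simp

lemma mg_upd_supp (s : α →₀ ℕ) (a : α) :
    (s + Finsupp.single a 1).support ⊆ insert a s.support := by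
  intro y hy
  rcases Finset.mem_union.1 (Finsupp.support_add hy) with h | h
  · exact Finset.mem_insert_of_mem h
  · exact Finset.mem_insert.2 (Or.inl (Finset.mem_singleton.1 (Finsupp.support_single_subset h)))

lemma mgStep_card (k : ℕ) (s : α →₀ ℕ) (a : α) (h : s.support.card ≤ k) :
    (mgStep k s a).support.card ≤ k := by
  rw [mgStep]
  split_ifs with hc
  · rw [mg_upd_eq]
    rcases hc with hp | hlt
    · have ha : a ∈ s.support := Finsupp.mem_support_iff.2 (by omega)
      calc (s + Finsupp.single a 1).support.card
          ≤ (insert a s.support).card := Finset.card_le_card (mg_upd_supp s a)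
        _ = s.support.card := by rw [Finset.insert_eq_self.2 ha]
        _ ≤ k := h
    · calc (s + Finsupp.single a 1).support.card
          ≤ (insert a s.support).card := Finset.card_le_card (mg_upd_supp s a)
        _ ≤ s.support.card + 1 := Finset.card_insert_le _ _
        _ ≤ k := by omega
  · calc (Finsupp.mapRange (· - 1) (by simp) s : α →₀ ℕ).support.card
        ≤ s.support.card := Finset.card_le_card (Finsupp.support_mapRange)
      _ ≤ k := h

lemma mgStep_apply_le (k : ℕ) (s : α →₀ ℕ) (a x : α) :
    (mgStep k s a) x ≤ s x + if a = x then 1 else 0 := by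
  rw [mgStep]
  by_cases hc : 0 < s a ∨ s.support.card < k
  · rw [if_pos hc, mg_upd_eq, Finsupp.add_apply, Finsupp.single_apply]
    try split_ifs <;> omega
  · rw [if_neg hc, mg_dec_apply s _ x]
    split_ifs <;> omega

lemma mgStep_key (k : ℕ) (s : α →₀ ℕ) (a x : α) (h : s.support.card ≤ k) :
    ((k : ℤ) + 1) * ((if a = x then 1 else 0) - (((mgStep k s a) x : ℤ) - (s x : ℤ)))
      ≤ 1 - ((mgSsum (mgStep k s a) : ℤ) - (mgSsum s : ℤ)) := by
  rw [mgStep]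
  by_cases hc : 0 < s a ∨ s.support.card < k
  · rw [if_pos hc, mg_upd_eq, mgSsum_add, mgSsum_single, mg_upd_apply]
    push_cast
    split_ifs <;> ring_nf <;> simp
  · rw [if_neg hc]
    push_neg at hc
    obtain ⟨hz, hk⟩ := hc
    have hcard : s.support.card = k := le_antisymm h hk
    rw [mg_dec_ssum s _, hcard]
    have hax : ((Finsupp.mapRange (· - 1) (by simp) s : α →₀ ℕ) x : ℤ) = (s x : ℤ) - min 1 (s x) := by
      rw [mg_dec_apply s _ x]; push_cast; omega
    rw [hax]
    rcases eq_or_ne a x with rfl | hne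
    · have : s a = 0 := by omega
      simp [this]
    · rw [if_neg hne]
      have hm : min 1 (s x) ≤ 1 := min_le_left _ _
      have h1 : ((min 1 (s x) : ℕ) : ℤ) ≤ 1 := by omega
      have h2 : (0 : ℤ) ≤ ((k : ℤ) + 1) := by positivity
      nlinarith [mul_le_mul_of_nonneg_left h1 h2, Int.natCast_nonneg (min 1 (s x))]

lemma mgRun_aux (k : ℕ) (x : α) (l : List α) : ∀ (s : α →₀ ℕ), s.support.card ≤ k →
    (l.foldl (mgStep k) s).support.card ≤ k ∧
    (l.foldl (mgStep k) s) x ≤ s x + l.count x ∧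
    ((k : ℤ) + 1) * (((s x : ℤ) + l.count x) - ((l.foldl (mgStep k) s) x : ℤ))
      ≤ ((mgSsum s : ℤ) + l.length) - (mgSsum (l.foldl (mgStep k) s) : ℤ) := by
  induction l with
  | nil => intro s hs; refine ⟨hs, by simp, by simp⟩
  | cons a l ih =>
    intro s hs
    have hstep := mgStep_key k s a x hs
    have happ := mgStep_apply_le k s a x
    have hc := mgStep_card k s a hs
    obtain ⟨h1, h2, h3⟩ := ih (mgStep k s a) hc
    have hcount : (a :: l).count x = l.count x + if a = x then 1 else 0 := by
      rw [List.count_cons]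
      congr 1
      simp [beq_iff_eq]
    refine ⟨h1, ?_, ?_⟩
    · simp only [List.foldl_cons]
      calc (l.foldl (mgStep k) (mgStep k s a)) x ≤ (mgStep k s a) x + l.count x := h2
        _ ≤ s x + (if a = x then 1 else 0) + l.count x := by omega
        _ = s x + (a :: l).count x := by omega
    · simp only [List.foldl_cons, List.length_cons, hcount]
      push_cast
      nlinarith [h3, hstep]

theorem stmt10 (k : ℕ) (stream : List α) (x : α) :
    (stream.count x : ℝ) - (stream.length : ℝ) / (k + 1) ≤ (mgRun k stream x : ℝ) ∧
    mgRun k stream x ≤ stream.count x := by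
  obtain ⟨h1, h2, h3⟩ := mgRun_aux k x stream 0 (by simp)
  have h0 : mgSsum (0 : α →₀ ℕ) = 0 := by simp [mgSsum]
  rw [mgRun]
  simp only [Finsupp.coe_zero, Pi.zero_apply, Nat.cast_zero, zero_add, h0] at h2 h3
  refine ⟨?_, h2⟩
  have hS : (0 : ℤ) ≤ (mgSsum (stream.foldl (mgStep k) 0) : ℤ) := Int.natCast_nonneg _
  have key : ((k : ℤ) + 1) * ((stream.count x : ℤ) - ((stream.foldl (mgStep k) 0) x : ℤ))
      ≤ (stream.length : ℤ) := by linarith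
  have hk : (0 : ℝ) < (k : ℝ) + 1 := by positivity
  have keyR : ((k : ℝ) + 1) * ((stream.count x : ℝ) - ((stream.foldl (mgStep k) 0) x : ℝ))
      ≤ (stream.length : ℝ) := by exact_mod_cast key
  have hd : (stream.count x : ℝ) - ((stream.foldl (mgStep k) 0) x : ℝ)
      ≤ (stream.length : ℝ) / ((k : ℝ) + 1) := by
    rw [le_div_iff₀ hk]; nlinarith
  have : ((k : ℝ) + 1) = (k : ℝ) + 1 := rfl
  push_cast
  linarith
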